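/- (Main theorem, label part) Assume: the classes are balanced (|S_c| = |S_{c*}| for all c); ‖x^{(0)}‖₂ ≤ 1 and ‖x_i^{(0)}‖₂ ≤ 1 for all i; α' < 1; Δ_0 > 0 and Γ_0 > 0 (so Δ̃_0 := min(Δ_0, Γ_0) > 0); and α Δ_0 ≥ log(K) + log(1 + 2/Δ̃_0). Let t_0 be the least t ∈ ℕ with K·exp(−α Δ_t) ≤ 1/4 (which exists since Δ_t ≥ Δ_0 (1+α')^t → ∞). Then for every t ≥ t_0 and every c ≠ c*, the test-label margin grows exponentially: y^{(t+1)}_{c*} − y^{(t+1)}_c ≥ (α'/2) · (1+γ')^t. -/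
import Mathlib


open Finset Real
open scoped RealInnerProductSpace BigOperators


lemma inner_sum_smul_right' {d : ℕ} {ι : Type*} (s : Finset ι) (v : EuclideanSpace ℝ (Fin d))
    (w : ι → ℝ) (u : ι → EuclideanSpace ℝ (Fin d)) :
    ⟪v, ∑ i ∈ s, w i • u i⟫ = ∑ i ∈ s, w i * ⟪v, u i⟫ := by
  rw [inner_sum]; exact Finset.sum_congr rfl fun i _ => real_inner_smul_right _ _ _

lemma combo_ge' {ι : Type*} (s : Finset ι) (w f : ι → ℝ) (hw : ∀ i ∈ s, 0 ≤ w i)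
    (hsum : ∑ i ∈ s, w i = 1) (r : ℝ) (h : ∀ i ∈ s, r ≤ f i) :
    r ≤ ∑ i ∈ s, w i * f i := by
  calc r = ∑ i ∈ s, w i * r := by rw [← Finset.sum_mul, hsum, one_mul]
  _ ≤ _ := Finset.sum_le_sum fun i hi => mul_le_mul_of_nonneg_left (h i hi) (hw i hi)

lemma combo_le' {ι : Type*} (s : Finset ι) (w f : ι → ℝ) (hw : ∀ i ∈ s, 0 ≤ w i)
    (hsum : ∑ i ∈ s, w i = 1) (r : ℝ) (h : ∀ i ∈ s, f i ≤ r) :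
    ∑ i ∈ s, w i * f i ≤ r := by
  calc ∑ i ∈ s, w i * f i ≤ ∑ i ∈ s, w i * r :=
    Finset.sum_le_sum fun i hi => mul_le_mul_of_nonneg_left (h i hi) (hw i hi)
  _ = r := by rw [← Finset.sum_mul, hsum, one_mul]

lemma neg_mul_norm_le_inner' {d : ℕ} (v u : EuclideanSpace ℝ (Fin d)) :
    -(‖v‖ * ‖u‖) ≤ ⟪v, u⟫ := by
  have := abs_real_inner_le_norm v u
  have h2 := neg_abs_le (⟪v, u⟫ : ℝ)
  linarith

set_option maxHeartbeats 4000000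

/-- **Main theorem, label part.** -/
theorem main_theorem_label_part
    (d n K : ℕ) (hK : 2 ≤ K)
    (α γ α' γ' : ℝ) (hα : 0 < α) (hγ : 0 < γ) (hα' : 0 < α') (hγ' : 0 < γ')
    (c : Fin n → Fin K)
    (hclass : ∀ k : Fin K, ∃ i, c i = k)
    (cstar : Fin K)
    (hne : (Finset.univ.filter (fun i => c i = cstar)).Nonempty)
    (hne' : (Finset.univ.filter (fun i => c i ≠ cstar)).Nonempty)
    (hcard : (Finset.univ.filter (fun i => c i = cstar)).card < n)
    (x : ℕ → Fin n → EuclideanSpace ℝ (Fin d))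
    (xt : ℕ → EuclideanSpace ℝ (Fin d))
    (yt : ℕ → Fin K → ℝ)
    (hyt0 : yt 0 = 0)
    (Atr : ℕ → Fin n → Fin n → ℝ)
    (hAtr : ∀ t j k, Atr t j k =
      if c k = c j then
        Real.exp (α * ⟪x t j, x t k⟫) /
          ∑ s ∈ Finset.univ.filter (fun s => c s = c j), Real.exp (α * ⟪x t j, x t s⟫)
      else 0)
    (hx : ∀ t j, x (t+1) j =
      x t j + α' • ∑ k ∈ Finset.univ.filter (fun k => c k = c j), Atr t j k • x t k)
    (A : ℕ → Fin n → ℝ)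
    (hA : ∀ t i, A t i =
      Real.exp (α * ⟪xt t, x t i⟫ + γ * (1 + γ') ^ t * yt t (c i)) /
        ∑ m, Real.exp (α * ⟪xt t, x t m⟫ + γ * (1 + γ') ^ t * yt t (c m)))
    (hxt : ∀ t, xt (t+1) = xt t + α' • ∑ i, A t i • x t i)
    (hyt : ∀ t, yt (t+1) =
      yt t + α' • ∑ i, A t i • ((1 + γ') ^ t • (Pi.single (c i) (1 : ℝ) : Fin K → ℝ)))
    (p : Fin K → ℕ → ℝ)
    (hp : ∀ cc t, p cc t = ∑ j ∈ Finset.univ.filter (fun i => c i = cc), A t j)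
    (R L Δ ρ Λ Γ : ℕ → ℝ)
    (hR : ∀ t, R t =
      (Finset.univ.filter (fun i => c i = cstar)).inf' hne (fun j => ⟪xt t, x t j⟫))
    (hL : ∀ t, L t =
      (Finset.univ.filter (fun i => c i ≠ cstar)).sup' hne' (fun j => ⟪xt t, x t j⟫))
    (hΔ : ∀ t, Δ t = R t - L t)
    (hρ : ∀ t, ρ t =
      ((Finset.univ.filter (fun i => c i = cstar)) ×ˢ
          (Finset.univ.filter (fun i => c i = cstar))).inf' (hne.product hne)
        (fun q => ⟪x t q.1, x t q.2⟫))
    (hΛ : ∀ t, Λ t =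
      ((Finset.univ.filter (fun i => c i = cstar)) ×ˢ
          (Finset.univ.filter (fun i => c i ≠ cstar))).sup' (hne.product hne')
        (fun q => ⟪x t q.1, x t q.2⟫))
    (hΓ : ∀ t, Γ t = ρ t - Λ t)
    (hx0 : ‖xt 0‖ ≤ 1) (hxi0 : ∀ i, ‖x 0 i‖ ≤ 1)
    (hbal : ∀ cc : Fin K, (Finset.univ.filter (fun i => c i = cc)).card =
      (Finset.univ.filter (fun i => c i = cstar)).card)
    (hα'1 : α' < 1)
    (hΔ0 : 0 < Δ 0) (hΓ0 : 0 < Γ 0)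
    (hinit : Real.log K + Real.log (1 + 2 / min (Δ 0) (Γ 0)) ≤ α * Δ 0)
    (t0 : ℕ)
    (ht0 : (K : ℝ) * Real.exp (-(α * Δ t0)) ≤ 1 / 4)
    (ht0min : ∀ u : ℕ, u < t0 → ¬ ((K : ℝ) * Real.exp (-(α * Δ u)) ≤ 1 / 4)) :
    ∀ t : ℕ, t0 ≤ t → ∀ cc : Fin K, cc ≠ cstar →
      α' / 2 * (1 + γ') ^ t ≤ yt (t+1) cstar - yt (t+1) cc := by
  -- ===== Stage 1 : softmax basics =====
  have hn : Nonempty (Fin n) := ⟨hne.choose⟩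
  set S := Finset.univ.filter (fun i => c i = cstar) with hSdef
  set T := Finset.univ.filter (fun i => c i ≠ cstar) with hTdef
  have hmemS : ∀ i, i ∈ S ↔ c i = cstar := by intro i; simp [hSdef]
  have hmemT : ∀ i, i ∈ T ↔ c i ≠ cstar := by intro i; simp [hTdef]
  set D : ℕ → ℝ := fun t => ∑ m, Real.exp (α * ⟪xt t, x t m⟫ + γ * (1 + γ') ^ t * yt t (c m))
    with hDdef
  have hDpos : ∀ t, 0 < D t := fun t =>
    Finset.sum_pos (fun m _ => Real.exp_pos _) Finset.univ_nonempty
  have hA2 : ∀ t i, A t i =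
      Real.exp (α * ⟪xt t, x t i⟫ + γ * (1 + γ') ^ t * yt t (c i)) / D t := hA
  have hApos : ∀ t i, 0 < A t i := fun t i => by
    rw [hA2]; exact div_pos (Real.exp_pos _) (hDpos t)
  have hAsum : ∀ t, ∑ i, A t i = 1 := by
    intro t
    simp only [hA2, ← Finset.sum_div]
    exact div_self (hDpos t).ne'
  have hsplitA : ∀ t, p cstar t + ∑ j ∈ T, A t j = 1 := by
    intro t
    rw [hp, ← hAsum t]
    exact Finset.sum_filter_add_sum_filter_not _ _ _
  have hRle : ∀ t j, c j = cstar → R t ≤ ⟪xt t, x t j⟫ := by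
    intro t j hj; rw [hR]
    exact Finset.inf'_le (fun j => (⟪xt t, x t j⟫ : ℝ)) ((hmemS j).2 hj)
  have hLge : ∀ t j, c j ≠ cstar → ⟪xt t, x t j⟫ ≤ L t := by
    intro t j hj; rw [hL]
    exact Finset.le_sup' (fun j => (⟪xt t, x t j⟫ : ℝ)) ((hmemT j).2 hj)
  have hScard : 0 < S.card := Finset.card_pos.2 hne
  have hnK : n = K * S.card := by
    have h1 : (Finset.univ : Finset (Fin n)).card = ∑ k : Fin K,
        ((Finset.univ : Finset (Fin n)).filter (fun i => c i = k)).card :=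
      Finset.card_eq_sum_card_fiberwise (fun i _ => Finset.mem_univ (c i))
    simpa [hbal, Finset.card_univ, mul_comm] using h1
  have hTcard : (T.card : ℝ) = ((K : ℝ) - 1) * S.card := by
    have h2 : T.card + S.card = n := by
      rw [hSdef, hTdef, add_comm]
      simpa using Finset.card_filter_add_card_filter_not
        (s := (Finset.univ : Finset (Fin n))) (p := fun i => c i = cstar)
    have h2r : (T.card : ℝ) + (S.card : ℝ) = (n : ℝ) := by exact_mod_cast h2
    have hnKr : (n : ℝ) = (K : ℝ) * (S.card : ℝ) := by exact_mod_cast hnK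
    linear_combination h2r + hnKr
  have tail : ∀ t, (∀ ccc, ccc ≠ cstar → yt t ccc ≤ yt t cstar) →
      ∑ j ∈ T, A t j ≤ ((K : ℝ) - 1) * Real.exp (-(α * Δ t)) := by
    intro t hm
    set g : ℝ := γ * (1 + γ') ^ t * yt t cstar with hg
    have hgl : 0 ≤ γ * (1 + γ') ^ t := by positivity
    have num_le : ∑ j ∈ T, Real.exp (α * ⟪xt t, x t j⟫ + γ * (1 + γ') ^ t * yt t (c j)) ≤
        (T.card : ℝ) * Real.exp (α * L t + g) := by
      calc ∑ j ∈ T, Real.exp (α * ⟪xt t, x t j⟫ + γ * (1 + γ') ^ t * yt t (c j))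
          ≤ ∑ _j ∈ T, Real.exp (α * L t + g) := by
            apply Finset.sum_le_sum
            intro j hj
            have hj' := (hmemT j).1 hj
            apply Real.exp_le_exp.2
            have h1 : α * ⟪xt t, x t j⟫ ≤ α * L t :=
              mul_le_mul_of_nonneg_left (hLge t j hj') hα.le
            have h2 : γ * (1 + γ') ^ t * yt t (c j) ≤ g :=
              mul_le_mul_of_nonneg_left (hm (c j) hj') hgl
            linarith
        _ = (T.card : ℝ) * Real.exp (α * L t + g) := by
            rw [Finset.sum_const, nsmul_eq_mul]
    have den_ge : (S.card : ℝ) * Real.exp (α * R t + g) ≤ D t := by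
      have h1 : (S.card : ℝ) * Real.exp (α * R t + g) ≤
          ∑ j ∈ S, Real.exp (α * ⟪xt t, x t j⟫ + γ * (1 + γ') ^ t * yt t (c j)) := by
        calc (S.card : ℝ) * Real.exp (α * R t + g)
            = ∑ _j ∈ S, Real.exp (α * R t + g) := by rw [Finset.sum_const, nsmul_eq_mul]
          _ ≤ ∑ j ∈ S, Real.exp (α * ⟪xt t, x t j⟫ + γ * (1 + γ') ^ t * yt t (c j)) := by
              apply Finset.sum_le_sum
              intro j hj
              have hj' := (hmemS j).1 hj
              apply Real.exp_le_exp.2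
              have := mul_le_mul_of_nonneg_left (hRle t j hj') hα.le
              rw [hj']
              linarith
      refine h1.trans ?_
      exact Finset.sum_le_sum_of_subset_of_nonneg (Finset.subset_univ S)
        (fun _ _ _ => (Real.exp_pos _).le)
    have hsum_eq : ∑ j ∈ T, A t j =
        (∑ j ∈ T, Real.exp (α * ⟪xt t, x t j⟫ + γ * (1 + γ') ^ t * yt t (c j))) / D t := by
      simp only [hA2, ← Finset.sum_div]
    rw [hsum_eq]
    have hden_pos : (0 : ℝ) < (S.card : ℝ) * Real.exp (α * R t + g) := by positivity
    have step : (∑ j ∈ T, Real.exp (α * ⟪xt t, x t j⟫ + γ * (1 + γ') ^ t * yt t (c j))) / D t ≤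
        ((T.card : ℝ) * Real.exp (α * L t + g)) / ((S.card : ℝ) * Real.exp (α * R t + g)) :=
      div_le_div₀ (by positivity) num_le hden_pos den_ge
    refine step.trans (le_of_eq ?_)
    have hSpos : (0 : ℝ) < (S.card : ℝ) := by exact_mod_cast hScard
    have hexp : Real.exp (α * L t + g) / Real.exp (α * R t + g) = Real.exp (-(α * Δ t)) := by
      rw [← Real.exp_sub, hΔ]
      ring_nf
    rw [hTcard, ← hexp]
    have hER : Real.exp (α * R t + g) ≠ 0 := (Real.exp_pos _).ne'
    field_simp
  -- ===== Stage 2 : geometry of training dynamics =====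
  have h1a : (0 : ℝ) < 1 + α' := by linarith
  have hAtr_nonneg : ∀ t j k, 0 ≤ Atr t j k := by
    intro t j k; rw [hAtr]
    split
    · apply div_nonneg (Real.exp_pos _).le
      exact Finset.sum_nonneg fun s _ => (Real.exp_pos _).le
    · exact le_refl 0
  have hAtr_sum : ∀ t j, ∑ k ∈ Finset.univ.filter (fun k => c k = c j), Atr t j k = 1 := by
    intro t j
    have hnecl : ((Finset.univ : Finset (Fin n)).filter (fun s => c s = c j)).Nonempty := by
      obtain ⟨i, hi⟩ := hclass (c j); exact ⟨i, by simp [hi]⟩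
    have hDtr : 0 < ∑ s ∈ Finset.univ.filter (fun s => c s = c j),
        Real.exp (α * ⟪x t j, x t s⟫) :=
      Finset.sum_pos (fun _ _ => Real.exp_pos _) hnecl
    have heq : ∀ k ∈ Finset.univ.filter (fun k => c k = c j), Atr t j k =
        Real.exp (α * ⟪x t j, x t k⟫) /
          ∑ s ∈ Finset.univ.filter (fun s => c s = c j), Real.exp (α * ⟪x t j, x t s⟫) := by
      intro k hk
      rw [hAtr, if_pos (Finset.mem_filter.1 hk).2]
    rw [Finset.sum_congr rfl heq, ← Finset.sum_div, div_self hDtr.ne']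
  have hcombo_ge : ∀ t j (v : EuclideanSpace ℝ (Fin d)) (r : ℝ),
      (∀ k, c k = c j → r ≤ ⟪v, x t k⟫) →
      r ≤ ⟪v, ∑ k ∈ Finset.univ.filter (fun k => c k = c j), Atr t j k • x t k⟫ := by
    intro t j v r h
    rw [inner_sum_smul_right']
    exact combo_ge' _ _ _ (fun k _ => hAtr_nonneg t j k) (hAtr_sum t j) r
      (fun k hk => h k (by simpa using (Finset.mem_filter.1 hk).2))
  have hcombo_le : ∀ t j (v : EuclideanSpace ℝ (Fin d)) (r : ℝ),
      (∀ k, c k = c j → ⟪v, x t k⟫ ≤ r) →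
      ⟪v, ∑ k ∈ Finset.univ.filter (fun k => c k = c j), Atr t j k • x t k⟫ ≤ r := by
    intro t j v r h
    rw [inner_sum_smul_right']
    exact combo_le' _ _ _ (fun k _ => hAtr_nonneg t j k) (hAtr_sum t j) r
      (fun k hk => h k (by simpa using (Finset.mem_filter.1 hk).2))
  -- norm bounds
  have hnorm : ∀ t, (∀ i, ‖x t i‖ ≤ (1 + α') ^ t) ∧ ‖xt t‖ ≤ (1 + α') ^ t := by
    intro t; induction t with
    | zero => simpa using ⟨hxi0, hx0⟩
    | succ t ih =>
      obtain ⟨ihx, ihxt⟩ := ih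
      have hstep : ∀ (v : EuclideanSpace ℝ (Fin d)) {ι : Type} (s : Finset ι) (w : ι → ℝ)
          (u : ι → EuclideanSpace ℝ (Fin d)), ‖v‖ ≤ (1 + α') ^ t →
          (∀ i ∈ s, 0 ≤ w i) → (∑ i ∈ s, w i = 1) → (∀ i ∈ s, ‖u i‖ ≤ (1 + α') ^ t) →
          ‖v + α' • ∑ i ∈ s, w i • u i‖ ≤ (1 + α') ^ (t + 1) := by
        intro v ι s w u hv hw hsum hu
        have h2 : ‖∑ i ∈ s, w i • u i‖ ≤ (1 + α') ^ t := by
          calc ‖∑ i ∈ s, w i • u i‖ ≤ ∑ i ∈ s, ‖w i • u i‖ := norm_sum_le _ _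
            _ = ∑ i ∈ s, w i * ‖u i‖ := Finset.sum_congr rfl fun i hi => by
                rw [norm_smul, Real.norm_eq_abs, abs_of_nonneg (hw i hi)]
            _ ≤ ∑ i ∈ s, w i * (1 + α') ^ t := Finset.sum_le_sum fun i hi =>
                mul_le_mul_of_nonneg_left (hu i hi) (hw i hi)
            _ = (1 + α') ^ t := by rw [← Finset.sum_mul, hsum, one_mul]
        calc ‖v + α' • ∑ i ∈ s, w i • u i‖ ≤ ‖v‖ + ‖α' • ∑ i ∈ s, w i • u i‖ := norm_add_le _ _
          _ = ‖v‖ + α' * ‖∑ i ∈ s, w i • u i‖ := by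
              rw [norm_smul, Real.norm_eq_abs, abs_of_pos hα']
          _ ≤ (1 + α') ^ t + α' * (1 + α') ^ t := by
              have := mul_le_mul_of_nonneg_left h2 hα'.le
              linarith
          _ = (1 + α') ^ (t + 1) := by ring
      constructor
      · intro j
        rw [hx]
        exact hstep _ _ _ _ (ihx j) (fun k _ => hAtr_nonneg t j k) (hAtr_sum t j)
          (fun k _ => ihx k)
      · rw [hxt]
        exact hstep _ _ _ _ ihxt (fun i _ => (hApos t i).le) (hAsum t) (fun i _ => ihx i)
  -- ρ and Λ accessors
  have hρle : ∀ t i j, c i = cstar → c j = cstar → ρ t ≤ ⟪x t i, x t j⟫ := by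
    intro t i j hi hj; rw [hρ]
    exact Finset.inf'_le (fun q => (⟪x t q.1, x t q.2⟫ : ℝ))
      ((Finset.mem_product (p := (i, j))).2 ⟨(hmemS i).2 hi, (hmemS j).2 hj⟩)
  have hΛge : ∀ t i j, c i = cstar → c j ≠ cstar → ⟪x t i, x t j⟫ ≤ Λ t := by
    intro t i j hi hj; rw [hΛ]
    exact Finset.le_sup' (fun q => (⟪x t q.1, x t q.2⟫ : ℝ))
      ((Finset.mem_product (p := (i, j))).2 ⟨(hmemS i).2 hi, (hmemT j).2 hj⟩)
  have hρge : ∀ t (r : ℝ), (∀ i j, c i = cstar → c j = cstar → r ≤ ⟪x t i, x t j⟫) → r ≤ ρ t := by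
    intro t r h; rw [hρ]
    apply Finset.le_inf'
    rintro ⟨i, j⟩ hq
    rw [Finset.mem_product] at hq
    exact h i j ((hmemS i).1 hq.1) ((hmemS j).1 hq.2)
  have hΛle : ∀ t (r : ℝ), (∀ i j, c i = cstar → c j ≠ cstar → ⟪x t i, x t j⟫ ≤ r) → Λ t ≤ r := by
    intro t r h; rw [hΛ]
    apply Finset.sup'_le
    rintro ⟨i, j⟩ hq
    rw [Finset.mem_product] at hq
    exact h i j ((hmemS i).1 hq.1) ((hmemT j).1 hq.2)
  have hRge : ∀ t (r : ℝ), (∀ j, c j = cstar → r ≤ ⟪xt t, x t j⟫) → r ≤ R t := by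
    intro t r h; rw [hR]
    apply Finset.le_inf'
    intro j hj
    exact h j ((hmemS j).1 hj)
  have hLle : ∀ t (r : ℝ), (∀ j, c j ≠ cstar → ⟪xt t, x t j⟫ ≤ r) → L t ≤ r := by
    intro t r h; rw [hL]
    apply Finset.sup'_le
    intro j hj
    exact h j ((hmemT j).1 hj)
  -- inner product expansion
  have hexpand : ∀ (a b u v : EuclideanSpace ℝ (Fin d)),
      ⟪a + α' • u, b + α' • v⟫ =
        ⟪a, b⟫ + α' * ⟪a, v⟫ + α' * ⟪u, b⟫ + α' * (α' * ⟪u, v⟫) := by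
    intro a b u v
    simp only [inner_add_left, inner_add_right, real_inner_smul_left, real_inner_smul_right]
    ring
  -- ρ step
  have hρstep : ∀ t, (1 + α') ^ 2 * ρ t ≤ ρ (t + 1) := by
    intro t
    apply hρge
    intro i j hi hj
    rw [hx t i, hx t j, hexpand]
    have b1 : ρ t ≤ ⟪x t i, x t j⟫ := hρle t i j hi hj
    have b2 : ρ t ≤ ⟪x t i, ∑ k ∈ Finset.univ.filter (fun k => c k = c j), Atr t j k • x t k⟫ :=
      hcombo_ge t j _ _ (fun k hk => hρle t i k hi (hk.trans hj))
    have b3 : ρ t ≤ ⟪∑ k ∈ Finset.univ.filter (fun k => c k = c i), Atr t i k • x t k, x t j⟫ := by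
      rw [real_inner_comm]
      exact hcombo_ge t i _ _ (fun k hk => by
        rw [real_inner_comm]; exact hρle t k j (hk.trans hi) hj)
    have b4 : ρ t ≤ ⟪∑ k ∈ Finset.univ.filter (fun k => c k = c i), Atr t i k • x t k,
        ∑ k ∈ Finset.univ.filter (fun k => c k = c j), Atr t j k • x t k⟫ := by
      apply hcombo_ge t j _ _
      intro k hk
      rw [real_inner_comm]
      exact hcombo_ge t i _ _ (fun l hl => by
        rw [real_inner_comm]; exact hρle t l k (hl.trans hi) (hk.trans hj))
    nlinarith [mul_le_mul_of_nonneg_left b2 hα'.le, mul_le_mul_of_nonneg_left b3 hα'.le,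
      mul_le_mul_of_nonneg_left (mul_le_mul_of_nonneg_left b4 hα'.le) hα'.le]
  -- Λ step
  have hΛstep : ∀ t, Λ (t + 1) ≤ (1 + α') ^ 2 * Λ t := by
    intro t
    apply hΛle
    intro i j hi hj
    rw [hx t i, hx t j, hexpand]
    have b1 : ⟪x t i, x t j⟫ ≤ Λ t := hΛge t i j hi hj
    have b2 : ⟪x t i, ∑ k ∈ Finset.univ.filter (fun k => c k = c j), Atr t j k • x t k⟫ ≤ Λ t :=
      hcombo_le t j _ _ (fun k hk => hΛge t i k hi (fun hc => hj (hk ▸ hc)))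
    have b3 : ⟪∑ k ∈ Finset.univ.filter (fun k => c k = c i), Atr t i k • x t k, x t j⟫ ≤ Λ t := by
      rw [real_inner_comm]
      exact hcombo_le t i _ _ (fun k hk => by
        rw [real_inner_comm]; exact hΛge t k j (hk.trans hi) hj)
    have b4 : ⟪∑ k ∈ Finset.univ.filter (fun k => c k = c i), Atr t i k • x t k,
        ∑ k ∈ Finset.univ.filter (fun k => c k = c j), Atr t j k • x t k⟫ ≤ Λ t := by
      apply hcombo_le t j _ _
      intro k hk
      rw [real_inner_comm]
      exact hcombo_le t i _ _ (fun l hl => by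
        rw [real_inner_comm]; exact hΛge t l k (hl.trans hi) (fun hc => hj (hk ▸ hc)))
    nlinarith [mul_le_mul_of_nonneg_left b2 hα'.le, mul_le_mul_of_nonneg_left b3 hα'.le,
      mul_le_mul_of_nonneg_left (mul_le_mul_of_nonneg_left b4 hα'.le) hα'.le]
  -- Γ lower bound
  have hΓstep : ∀ t, (1 + α') ^ 2 * Γ t ≤ Γ (t + 1) := by
    intro t
    rw [hΓ, hΓ]
    have h1 := hρstep t
    have h2 := hΛstep t
    nlinarith
  have hΓlb : ∀ t, (1 + α') ^ (2 * t) * Γ 0 ≤ Γ t := by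
    intro t; induction t with
    | zero => simp
    | succ t ih =>
      have he : 2 * (t + 1) = 2 * t + 2 := by ring
      rw [he, pow_add]
      calc (1 + α') ^ (2 * t) * (1 + α') ^ 2 * Γ 0
          = (1 + α') ^ 2 * ((1 + α') ^ (2 * t) * Γ 0) := by ring
        _ ≤ (1 + α') ^ 2 * Γ t := by
            apply mul_le_mul_of_nonneg_left ih (by positivity)
        _ ≤ Γ (t + 1) := hΓstep t
  have hΓpos : ∀ t, 0 < Γ t := fun t =>
    lt_of_lt_of_le (by positivity) (hΓlb t)
  -- ===== Stage 3 : margin and Δ dynamics =====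
  have hγ'1 : (0:ℝ) < 1 + γ' := by linarith
  have hyrec : ∀ t (ccc : Fin K), yt (t+1) ccc = yt t ccc + α' * ((1 + γ') ^ t * p ccc t) := by
    intro t ccc
    have h2 : (∑ i, A t i • ((1 + γ') ^ t • (Pi.single (c i) (1:ℝ) : Fin K → ℝ))) ccc
        = (1 + γ') ^ t * p ccc t := by
      rw [Finset.sum_apply]
      simp only [Pi.smul_apply, smul_eq_mul, Pi.single_apply]
      rw [hp, Finset.mul_sum, Finset.sum_filter]
      apply Finset.sum_congr rfl
      intro i _
      by_cases h : c i = ccc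
      · rw [if_pos h.symm, if_pos h]; ring
      · rw [if_neg (fun hc => h hc.symm), if_neg h]; ring
    rw [hyt t]
    simp only [Pi.add_apply, Pi.smul_apply, smul_eq_mul]
    rw [h2]
  have hyrec2 : ∀ t (ccc : Fin K), yt (t+1) cstar - yt (t+1) ccc =
      (yt t cstar - yt t ccc) + α' * ((1 + γ') ^ t * (p cstar t - p ccc t)) := by
    intro t ccc; rw [hyrec t cstar, hyrec t ccc]; ring
  have hpcc_le : ∀ t (ccc : Fin K), ccc ≠ cstar → p ccc t ≤ ∑ j ∈ T, A t j := by
    intro t ccc hc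
    rw [hp]
    apply Finset.sum_le_sum_of_subset_of_nonneg
    · intro j hj
      rw [Finset.mem_filter] at hj
      exact (hmemT j).2 (by rw [hj.2]; exact hc)
    · intro j _ _; exact (hApos t j).le
  -- initial smallness
  set m0 := min (Δ 0) (Γ 0) with hm0def
  have hm0pos : 0 < m0 := lt_min hΔ0 hΓ0
  have hm0le2 : m0 ≤ 2 := by
    obtain ⟨j0, hj0⟩ := hne
    obtain ⟨k0, hk0⟩ := hne'
    have hj0' := (hmemS j0).1 hj0
    have hk0' := (hmemT k0).1 hk0
    have h1 : R 0 ≤ 1 := by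
      have h2 := hRle 0 j0 hj0'
      have h3 := real_inner_le_norm (xt 0) (x 0 j0)
      have h4 := hxi0 j0
      have h5 := norm_nonneg (xt 0)
      have h6 := norm_nonneg (x 0 j0)
      nlinarith
    have h2 : -1 ≤ L 0 := by
      have h2 := hLge 0 k0 hk0'
      have h3 := neg_mul_norm_le_inner' (xt 0) (x 0 k0)
      have h4 := hxi0 k0
      have h5 := norm_nonneg (xt 0)
      have h6 := norm_nonneg (x 0 k0)
      nlinarith
    have hmle : m0 ≤ Δ 0 := by rw [hm0def]; exact min_le_left _ _
    have hd0 := hΔ 0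
    linarith
  have hKpos : (0:ℝ) < K := by positivity
  have hK2 : (2:ℝ) ≤ (K:ℝ) := by exact_mod_cast hK
  have hε0 : (K:ℝ) * Real.exp (-(α * Δ 0)) ≤ m0 / (m0 + 2) := by
    have hu : (0:ℝ) < 1 + 2 / m0 := by positivity
    have h1 : (K:ℝ) * (1 + 2 / m0) ≤ Real.exp (α * Δ 0) := by
      have h2 := Real.exp_le_exp.2 hinit
      rwa [Real.exp_add, Real.exp_log hKpos, Real.exp_log hu] at h2
    have hE : (0:ℝ) < Real.exp (α * Δ 0) := Real.exp_pos _
    have hmm : m0 / (m0 + 2) = 1 / (1 + 2 / m0) := by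
      field_simp
    rw [hmm, Real.exp_neg, le_div_iff₀ hu]
    have h3 := mul_le_mul_of_nonneg_right h1 (inv_nonneg.2 hE.le)
    calc (K:ℝ) * (Real.exp (α * Δ 0))⁻¹ * (1 + 2 / m0)
        = (K:ℝ) * (1 + 2 / m0) * (Real.exp (α * Δ 0))⁻¹ := by ring
      _ ≤ Real.exp (α * Δ 0) * (Real.exp (α * Δ 0))⁻¹ := h3
      _ = 1 := mul_inv_cancel₀ hE.ne'
  have hm0frac : m0 / (m0 + 2) ≤ Γ 0 / (Γ 0 + 2) := by
    rw [div_le_div_iff₀ (by linarith) (by linarith)]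
    nlinarith [min_le_right (Δ 0) (Γ 0)]
  have hm0half : m0 / (m0 + 2) ≤ 1 / 2 := by
    rw [div_le_div_iff₀ (by linarith) (by norm_num)]
    linarith
  have hεbound : ∀ t, (∀ ccc, ccc ≠ cstar → yt t ccc ≤ yt t cstar) → Δ 0 ≤ Δ t →
      ∑ j ∈ T, A t j ≤ m0 / (m0 + 2) := by
    intro t hm hd
    refine (tail t hm).trans ?_
    have e0 : α * Δ 0 ≤ α * Δ t := mul_le_mul_of_nonneg_left hd hα.le
    have e1 : Real.exp (-(α * Δ t)) ≤ Real.exp (-(α * Δ 0)) := Real.exp_le_exp.2 (by linarith)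
    have h1 : ((K:ℝ) - 1) * Real.exp (-(α * Δ t)) ≤ K * Real.exp (-(α * Δ 0)) := by
      nlinarith [Real.exp_pos (-(α * Δ t)), Real.exp_pos (-(α * Δ 0))]
    exact h1.trans hε0
  -- Δ step
  have hΔstep : ∀ t, (∀ ccc, ccc ≠ cstar → yt t ccc ≤ yt t cstar) → Δ 0 ≤ Δ t →
      (1 + α') * Δ t ≤ Δ (t + 1) := by
    intro t hm hd
    set ε := ∑ j ∈ T, A t j with hεdef
    have hεK : ε ≤ m0 / (m0 + 2) := hεbound t hm hd
    have hεnn : 0 ≤ ε := Finset.sum_nonneg fun j _ => (hApos t j).le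
    have hPe : p cstar t = 1 - ε := by linarith [hsplitA t]
    set B2 : ℝ := (1 + α') ^ t * (1 + α') ^ t with hB2def
    have hB2pos : 0 < B2 := by rw [hB2def]; positivity
    have hBx : ∀ i, ‖x t i‖ ≤ (1 + α') ^ t := (hnorm t).1
    have hip_lb : ∀ (i k : Fin n), -B2 ≤ ⟪x t i, x t k⟫ := by
      intro i k
      have h1 := neg_mul_norm_le_inner' (x t i) (x t k)
      have h2 : ‖x t i‖ * ‖x t k‖ ≤ B2 := by
        rw [hB2def]
        exact mul_le_mul (hBx i) (hBx k) (norm_nonneg _) (by positivity)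
      linarith
    have hip_ub : ∀ (i k : Fin n), ⟪x t i, x t k⟫ ≤ B2 := by
      intro i k
      have h1 := real_inner_le_norm (x t i) (x t k)
      have h2 : ‖x t i‖ * ‖x t k‖ ≤ B2 := by
        rw [hB2def]
        exact mul_le_mul (hBx i) (hBx k) (norm_nonneg _) (by positivity)
      linarith
    have hmix_ge : ∀ (v : EuclideanSpace ℝ (Fin d)) (r : ℝ),
        (∀ i, c i = cstar → r ≤ ⟪v, x t i⟫) → (∀ i, -B2 ≤ ⟪v, x t i⟫) →
        p cstar t * r - ε * B2 ≤ ⟪v, ∑ i, A t i • x t i⟫ := by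
      intro v r h1 h2
      rw [inner_sum_smul_right' Finset.univ v (A t) (x t)]
      rw [← Finset.sum_filter_add_sum_filter_not Finset.univ (fun i => c i = cstar)
        (fun i => A t i * ⟪v, x t i⟫)]
      have g1 : p cstar t * r ≤ ∑ i ∈ S, A t i * ⟪v, x t i⟫ := by
        calc p cstar t * r = ∑ i ∈ S, A t i * r := by rw [hp, Finset.sum_mul]
          _ ≤ ∑ i ∈ S, A t i * ⟪v, x t i⟫ := Finset.sum_le_sum fun i hi =>
              mul_le_mul_of_nonneg_left (h1 i ((hmemS i).1 hi)) (hApos t i).le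
      have g2 : -(ε * B2) ≤ ∑ i ∈ T, A t i * ⟪v, x t i⟫ := by
        calc -(ε * B2) = ∑ i ∈ T, A t i * (-B2) := by
              rw [hεdef, Finset.sum_mul]
              simp [mul_neg, Finset.sum_neg_distrib]
          _ ≤ ∑ i ∈ T, A t i * ⟪v, x t i⟫ := Finset.sum_le_sum fun i hi =>
              mul_le_mul_of_nonneg_left (h2 i) (hApos t i).le
      linarith
    have hmix_le : ∀ (v : EuclideanSpace ℝ (Fin d)) (r : ℝ),
        (∀ i, c i = cstar → ⟪v, x t i⟫ ≤ r) → (∀ i, ⟪v, x t i⟫ ≤ B2) →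
        ⟪v, ∑ i, A t i • x t i⟫ ≤ p cstar t * r + ε * B2 := by
      intro v r h1 h2
      rw [inner_sum_smul_right' Finset.univ v (A t) (x t)]
      rw [← Finset.sum_filter_add_sum_filter_not Finset.univ (fun i => c i = cstar)
        (fun i => A t i * ⟪v, x t i⟫)]
      have g1 : ∑ i ∈ S, A t i * ⟪v, x t i⟫ ≤ p cstar t * r := by
        calc ∑ i ∈ S, A t i * ⟪v, x t i⟫ ≤ ∑ i ∈ S, A t i * r := Finset.sum_le_sum fun i hi =>
              mul_le_mul_of_nonneg_left (h1 i ((hmemS i).1 hi)) (hApos t i).le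
          _ = p cstar t * r := by rw [hp, Finset.sum_mul]
      have g2 : ∑ i ∈ T, A t i * ⟪v, x t i⟫ ≤ ε * B2 := by
        calc ∑ i ∈ T, A t i * ⟪v, x t i⟫ ≤ ∑ i ∈ T, A t i * B2 := Finset.sum_le_sum fun i hi =>
              mul_le_mul_of_nonneg_left (h2 i) (hApos t i).le
          _ = ε * B2 := by rw [hεdef, Finset.sum_mul]
      linarith
    have hRnew : ∀ j, c j = cstar →
        (1 + α') * R t + (α' + α' * α') * (p cstar t * ρ t - ε * B2) ≤
          ⟪xt (t+1), x (t+1) j⟫ := by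
      intro j hj
      rw [hxt t, hx t j, hexpand]
      have b1 : R t ≤ ⟪xt t, x t j⟫ := hRle t j hj
      have b2 : R t ≤ ⟪xt t, ∑ k ∈ Finset.univ.filter (fun k => c k = c j), Atr t j k • x t k⟫ :=
        hcombo_ge t j (xt t) _ (fun k hk => hRle t k (hk.trans hj))
      have b3 : p cstar t * ρ t - ε * B2 ≤ ⟪∑ i, A t i • x t i, x t j⟫ := by
        rw [real_inner_comm]
        exact hmix_ge (x t j) (ρ t)
          (fun i hi => by rw [real_inner_comm]; exact hρle t i j hi hj)
          (fun i => by rw [real_inner_comm]; exact hip_lb i j)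
      have b4 : p cstar t * ρ t - ε * B2 ≤
          ⟪∑ i, A t i • x t i, ∑ k ∈ Finset.univ.filter (fun k => c k = c j), Atr t j k • x t k⟫ := by
        apply hcombo_ge t j _ _
        intro k hk
        rw [real_inner_comm]
        exact hmix_ge (x t k) (ρ t)
          (fun i hi => by rw [real_inner_comm]; exact hρle t i k hi (hk.trans hj))
          (fun i => by rw [real_inner_comm]; exact hip_lb i k)
      nlinarith [mul_le_mul_of_nonneg_left b2 hα'.le, mul_le_mul_of_nonneg_left b3 hα'.le,
        mul_le_mul_of_nonneg_left (mul_le_mul_of_nonneg_left b4 hα'.le) hα'.le]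
    have hLnew : ∀ j, c j ≠ cstar →
        ⟪xt (t+1), x (t+1) j⟫ ≤
          (1 + α') * L t + (α' + α' * α') * (p cstar t * Λ t + ε * B2) := by
      intro j hj
      rw [hxt t, hx t j, hexpand]
      have b1 : ⟪xt t, x t j⟫ ≤ L t := hLge t j hj
      have b2 : ⟪xt t, ∑ k ∈ Finset.univ.filter (fun k => c k = c j), Atr t j k • x t k⟫ ≤ L t :=
        hcombo_le t j (xt t) _ (fun k hk => hLge t k (fun hc => hj (hk ▸ hc)))
      have b3 : ⟪∑ i, A t i • x t i, x t j⟫ ≤ p cstar t * Λ t + ε * B2 := by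
        rw [real_inner_comm]
        exact hmix_le (x t j) (Λ t)
          (fun i hi => by rw [real_inner_comm]; exact hΛge t i j hi hj)
          (fun i => by rw [real_inner_comm]; exact hip_ub i j)
      have b4 : ⟪∑ i, A t i • x t i, ∑ k ∈ Finset.univ.filter (fun k => c k = c j), Atr t j k • x t k⟫
          ≤ p cstar t * Λ t + ε * B2 := by
        apply hcombo_le t j _ _
        intro k hk
        rw [real_inner_comm]
        exact hmix_le (x t k) (Λ t)
          (fun i hi => by rw [real_inner_comm]; exact hΛge t i k hi (fun hc => hj (hk ▸ hc)))
          (fun i => by rw [real_inner_comm]; exact hip_ub i k)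
      nlinarith [mul_le_mul_of_nonneg_left b2 hα'.le, mul_le_mul_of_nonneg_left b3 hα'.le,
        mul_le_mul_of_nonneg_left (mul_le_mul_of_nonneg_left b4 hα'.le) hα'.le]
    have hR1 : (1 + α') * R t + (α' + α' * α') * (p cstar t * ρ t - ε * B2) ≤ R (t+1) :=
      hRge (t+1) _ hRnew
    have hL1 : L (t+1) ≤ (1 + α') * L t + (α' + α' * α') * (p cstar t * Λ t + ε * B2) :=
      hLle (t+1) _ hLnew
    have hqpos : (0:ℝ) < (1 + α') ^ (2 * t) := by positivity
    have hqB : B2 = (1 + α') ^ (2 * t) := by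
      rw [hB2def, ← pow_add]; congr 1; ring
    have hΓt := hΓlb t
    have hεle' : ε * (Γ 0 + 2) ≤ Γ 0 := by
      have h1 : ε ≤ Γ 0 / (Γ 0 + 2) := hεK.trans hm0frac
      exact (le_div_iff₀ (by linarith)).1 h1
    have hbracket : 0 ≤ p cstar t * (ρ t - Λ t) - 2 * ε * B2 := by
      rw [← hΓ t, hPe, hqB]
      have e1 : (1 + α') ^ (2 * t) * (ε * (Γ 0 + 2)) ≤ (1 + α') ^ (2 * t) * Γ 0 :=
        mul_le_mul_of_nonneg_left hεle' hqpos.le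
      have hε1 : ε ≤ 1 := by nlinarith
      have e2 : (1 - ε) * ((1 + α') ^ (2 * t) * Γ 0) ≤ (1 - ε) * Γ t :=
        mul_le_mul_of_nonneg_left hΓt (by linarith)
      nlinarith
    rw [hΔ (t+1), hΔ t]
    nlinarith [hR1, hL1, mul_nonneg (by positivity : (0:ℝ) ≤ α' + α' * α') hbracket]
  -- main induction : margins stay nonnegative and Δ grows
  have hmain : ∀ t, (∀ ccc, ccc ≠ cstar → yt t ccc ≤ yt t cstar) ∧ Δ 0 ≤ Δ t := by
    intro t; induction t with
    | zero => exact ⟨fun ccc _ => le_of_eq (by rw [hyt0]; rfl), le_refl (Δ 0)⟩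
    | succ t ih =>
      obtain ⟨hm, hd⟩ := ih
      have hstep := hΔstep t hm hd
      have hΔtpos : 0 < Δ t := lt_of_lt_of_le hΔ0 hd
      have hd1 : Δ 0 ≤ Δ (t+1) := by nlinarith
      refine ⟨?_, hd1⟩
      intro ccc hc
      have hεK : ∑ j ∈ T, A t j ≤ m0 / (m0 + 2) := hεbound t hm hd
      have h1 := hpcc_le t ccc hc
      have h2 := hsplitA t
      have h3 := hεK.trans hm0half
      have hphalf : p ccc t ≤ p cstar t := by linarith
      have hrec := hyrec2 t ccc
      have hmc := hm ccc hc
      have hlampos : (0:ℝ) < (1 + γ') ^ t := pow_pos hγ'1 t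
      nlinarith [mul_nonneg (mul_nonneg hα'.le hlampos.le) (by linarith : (0:ℝ) ≤ p cstar t - p ccc t)]
  have hΔmono : ∀ t, Δ t ≤ Δ (t+1) := by
    intro t
    obtain ⟨hm, hd⟩ := hmain t
    have hstep := hΔstep t hm hd
    have hΔtpos : 0 < Δ t := lt_of_lt_of_le hΔ0 hd
    nlinarith
  have hΔt0 : ∀ t, t0 ≤ t → Δ t0 ≤ Δ t := by
    intro t ht
    induction t, ht using Nat.le_induction with
    | base => exact le_refl _
    | succ t ht ih => exact ih.trans (hΔmono t)
  -- ===== conclusion =====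
  intro t ht ccc hc
  obtain ⟨hm, hd⟩ := hmain t
  have htail := tail t hm
  have hεsmall : ∑ j ∈ T, A t j ≤ 1 / 4 := by
    refine htail.trans ?_
    have e0 : α * Δ t0 ≤ α * Δ t := mul_le_mul_of_nonneg_left (hΔt0 t ht) hα.le
    have e1 : Real.exp (-(α * Δ t)) ≤ Real.exp (-(α * Δ t0)) := Real.exp_le_exp.2 (by linarith)
    nlinarith [Real.exp_pos (-(α * Δ t)), Real.exp_pos (-(α * Δ t0)), ht0]
  have hpcc : p ccc t ≤ 1 / 4 := (hpcc_le t ccc hc).trans hεsmall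
  have hPge : 3 / 4 ≤ p cstar t := by linarith [hsplitA t]
  have hrec := hyrec2 t ccc
  have hmc := hm ccc hc
  have hlampos : (0:ℝ) < (1 + γ') ^ t := pow_pos hγ'1 t
  nlinarith [mul_le_mul_of_nonneg_left (by linarith : (1:ℝ)/2 ≤ p cstar t - p ccc t)
    (mul_nonneg hα'.le hlampos.le)]
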